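/- arXiv:2604.25645 — 8 statements merged into one kernel-verified Lean document; each statement's English description precedes it below -/
import Mathlib

section
/- The set of inversions of w, i.e. {(a,b) : 1 ≤ a < b ≤ n and w⁻¹(a) > w⁻¹(b)}, equals {(i, jq+1) : 1 ≤ j ≤ r and i ∈ C_j}. -/
/-- The set of inversions of `w`, i.e.
`{(a,b) : 1 ≤ a < b ≤ n and w⁻¹(a) > w⁻¹(b)}`, equals
`{(i, jq+1) : 1 ≤ j ≤ r and i ∈ C_j}`, where
`C_j = {1,…,jq+1} \ {pq+1 : 1 ≤ p ≤ j}` and `w = w_{r,n}` is the permutation of `{1,…,n}`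
with `w(j) = jq+1` for `1 ≤ j ≤ r`, increasing on `{r+1,…,n}` (one-line notation
`(q+1, 2q+1, …, rq+1)` followed by the remaining values in increasing order),
with `n = rq+1`, `r ≥ 1`, `q ≥ 2`. -/
theorem stmt_1 (r q : ℕ) (hr : 1 ≤ r) (hq : 2 ≤ q) (n : ℕ) (hn : n = r * q + 1)
    (w : Equiv.Perm ℕ)
    (hfix : ∀ k, k ∉ Finset.Icc 1 n → w k = k)
    (hw : ∀ j, 1 ≤ j → j ≤ r → w j = j * q + 1)
    (hmono : ∀ a b, r + 1 ≤ a → a < b → b ≤ n → w a < w b) :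
    {p : ℕ × ℕ | 1 ≤ p.1 ∧ p.1 < p.2 ∧ p.2 ≤ n ∧ w.symm p.2 < w.symm p.1}
      = {p : ℕ × ℕ | ∃ j, 1 ≤ j ∧ j ≤ r ∧ p.2 = j * q + 1 ∧
          1 ≤ p.1 ∧ p.1 ≤ j * q + 1 ∧ ∀ t, 1 ≤ t → t ≤ j → p.1 ≠ t * q + 1} := by
  -- w.symm of a special value j*q+1 is j
  have hsymm : ∀ j, 1 ≤ j → j ≤ r → w.symm (j * q + 1) = j := by
    intro j h1 h2
    rw [← hw j h1 h2, Equiv.symm_apply_apply]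
  -- w.symm of a non-special value in [1,n] lies in [r+1,n]
  have hmem : ∀ a, 1 ≤ a → a ≤ n → (∀ t, 1 ≤ t → t ≤ r → a ≠ t * q + 1) →
      r + 1 ≤ w.symm a ∧ w.symm a ≤ n := by
    intro a h1 h2 hns
    have hwa : w (w.symm a) = a := w.apply_symm_apply a
    by_cases hk : w.symm a ∈ Finset.Icc 1 n
    · simp only [Finset.mem_Icc] at hk
      obtain ⟨hk1, hk2⟩ := hk
      refine ⟨?_, hk2⟩
      by_contra hlt
      push_neg at hlt
      have hkr : w.symm a ≤ r := by omega
      exact hns _ hk1 hkr (hwa.symm.trans (hw _ hk1 hkr))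
    · have := hfix _ hk
      rw [hwa] at this
      exact absurd (Finset.mem_Icc.mpr ⟨h1, h2⟩) (this ▸ hk)
  ext ⟨a, b⟩
  simp only [Set.mem_setOf_eq]
  constructor
  · rintro ⟨ha1, hab, hbn, hinv⟩
    by_cases hbspec : ∃ j, 1 ≤ j ∧ j ≤ r ∧ b = j * q + 1
    · obtain ⟨j, hj1, hjr, hbj⟩ := hbspec
      refine ⟨j, hj1, hjr, hbj, ha1, by omega, ?_⟩
      intro t ht1 htj hat
      have hsa : w.symm a = t := by rw [hat]; exact hsymm t ht1 (le_trans htj hjr)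
      have hsb : w.symm b = j := by rw [hbj]; exact hsymm j hj1 hjr
      omega
    · push_neg at hbspec
      have hb1 : 1 ≤ b := by omega
      have hb' := hmem b hb1 hbn hbspec
      by_cases haspec : ∃ t, 1 ≤ t ∧ t ≤ r ∧ a = t * q + 1
      · obtain ⟨t, ht1, htr, hat⟩ := haspec
        have hsa : w.symm a = t := by rw [hat]; exact hsymm t ht1 htr
        omega
      · push_neg at haspec
        have ha' := hmem a ha1 (by omega) haspec
        have := hmono (w.symm b) (w.symm a) hb'.1 hinv ha'.2
        rw [w.apply_symm_apply, w.apply_symm_apply] at this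
        omega
  · rintro ⟨j, hj1, hjr, hb, ha1, haj, hns⟩
    have hjq : j * q ≤ r * q := Nat.mul_le_mul_right q hjr
    have hbn : b ≤ n := by omega
    have hab : a < b := by have := hns j hj1 le_rfl; omega
    have hans : ∀ t, 1 ≤ t → t ≤ r → a ≠ t * q + 1 := by
      intro t ht1 htr hat
      by_cases htj : t ≤ j
      · exact hns t ht1 htj hat
      · have : (j + 1) * q ≤ t * q := Nat.mul_le_mul_right q (by omega)
        have : j * q + q ≤ t * q := by rwa [add_mul, one_mul] at this
        omega
    have ha' := hmem a ha1 (by omega) hans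
    have hsb : w.symm b = j := by rw [hb]; exact hsymm j hj1 hjr
    exact ⟨ha1, hab, hbn, by omega⟩
end

section
/- The number of inversions of w, i.e. the cardinality of {(a,b) : 1 ≤ a < b ≤ n and w⁻¹(a) > w⁻¹(b)}, equals r + (q−1)·r(r+1)/2. -/
/-!
Inversion pairs of `w⁻¹` correspond to those of `w` by swapping and applying `w⁻¹`, so we count
the inversions of `w` row by row, i.e. sum its Lehmer code. Positions after `r` contribute nothing
since `w` increases there. For `i ≤ r`, exactly `w i - 1 = iq` positions carry a smaller value,
and the `i - 1` positions left of `i` are among them, which leaves `iq - (i - 1) = i(q - 1) + 1`.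
Summing over `1 ≤ i ≤ r` gives `r + (q - 1) r (r + 1) / 2`.
-/

open Finset

namespace Equiv.Perm

variable {α : Type*}

def inversionsOn [LT α] [DecidableLT α] (σ : Perm α) (s : Finset α) : Finset (α × α) :=
  (s ×ˢ s).filter fun p => p.1 < p.2 ∧ σ p.2 < σ p.1

theorem apply_mem_iff_of_forall_notMem {σ : Perm α} {s : Finset α}
    (h : ∀ x ∉ s, σ x = x) (x : α) : σ x ∈ s ↔ x ∈ s := by
  refine ⟨fun hσx => by_contra fun hx => hx (h x hx ▸ hσx), fun hx => by_contra fun hσx => ?_⟩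
  rw [σ.injective (h (σ x) hσx)] at hσx
  exact hσx hx

theorem symm_apply_mem_iff {σ : Perm α} {s : Finset α} (hs : ∀ x, σ x ∈ s ↔ x ∈ s)
    (x : α) : σ.symm x ∈ s ↔ x ∈ s := by
  simpa using (hs (σ.symm x)).symm

theorem card_inversionsOn_symm [LT α] [DecidableLT α] {σ : Perm α} {s : Finset α}
    (hs : ∀ x, σ x ∈ s ↔ x ∈ s) : #(inversionsOn σ.symm s) = #(σ.inversionsOn s) := by
  refine card_nbij' (fun p => (σ.symm p.2, σ.symm p.1)) (fun p => (σ p.2, σ p.1)) ?_ ?_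
    (fun _ _ => by simp) (fun _ _ => by simp)
  · rintro ⟨a, b⟩ hab
    simp_all [inversionsOn, symm_apply_mem_iff hs]
  · rintro ⟨a, b⟩ hab
    simp_all [inversionsOn]

def lehmerCodeOn [LT α] [DecidableLT α] (σ : Perm α) (s : Finset α) (i : α) : ℕ :=
  #{j ∈ s | i < j ∧ σ j < σ i}

theorem card_inversionsOn_eq_sum_lehmerCodeOn [LinearOrder α] (σ : Perm α) (s : Finset α) :
    #(σ.inversionsOn s) = ∑ i ∈ s, σ.lehmerCodeOn s i := by
  simp only [inversionsOn, lehmerCodeOn, card_filter, sum_product]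

theorem lehmerCodeOn_eq_zero [LinearOrder α] {σ : Perm α} {s : Finset α} {i : α}
    (h : ∀ j ∈ s, i < j → σ i < σ j) : σ.lehmerCodeOn s i = 0 := by
  rw [lehmerCodeOn, card_eq_zero, filter_eq_empty_iff]
  exact fun j hj ⟨hij, hσ⟩ => (h j hj hij).not_gt hσ

theorem card_filter_apply_lt [LinearOrder α] {σ : Perm α} {s : Finset α}
    (hs : ∀ x, σ x ∈ s ↔ x ∈ s) (v : α) : #{j ∈ s | σ j < v} = #{x ∈ s | x < v} := by
  refine card_nbij' σ σ.symm ?_ ?_ (fun _ _ => by simp) (fun _ _ => by simp)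
  · intro j hj
    simp_all
  · intro x hx
    simp_all [symm_apply_mem_iff hs]

theorem lehmerCodeOn_add_card_filter_lt [LinearOrder α] (σ : Perm α) (s : Finset α) (i : α) :
    σ.lehmerCodeOn s i + #{j ∈ s | j < i ∧ σ j < σ i} = #{j ∈ s | σ j < σ i} := by
  rw [lehmerCodeOn, ← card_filter_add_card_filter_not (fun j => i < j) (s := {j ∈ s | σ j < σ i}),
    filter_filter, filter_filter]
  congr 2 <;> refine filter_congr fun j _ => ?_
  · exact and_comm
  · constructor
    · rintro ⟨hji, hσ⟩
      exact ⟨hσ, hji.not_gt⟩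
    · rintro ⟨hσ, hij⟩
      exact ⟨(not_lt.1 hij).lt_of_ne (by rintro rfl; exact hσ.false), hσ⟩

end Equiv.Perm

theorem two_mul_sum_Icc_mul_add_one (q r : ℕ) :
    2 * ∑ i ∈ Icc 1 r, (i * q + 1) = 2 * r + q * (r * (r + 1)) := by
  induction r with
  | zero => simp
  | succ r ih =>
    rw [sum_Icc_succ_top (by omega), mul_add, ih]
    ring

open Equiv Perm

theorem lehmerCodeOn_of_mem_Icc {r q n i : ℕ} {w : Perm ℕ} (hq : 1 ≤ q) (hn : n = r * q + 1)
    (hs : ∀ x, w x ∈ Icc 1 n ↔ x ∈ Icc 1 n) (hw : ∀ j, 1 ≤ j → j ≤ r → w j = j * q + 1)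
    (hi : i ∈ Icc 1 r) : w.lehmerCodeOn (Icc 1 n) i = i * (q - 1) + 1 := by
  obtain ⟨hi1, hir⟩ := mem_Icc.1 hi
  have hiq : i * q ≤ r * q := Nat.mul_le_mul_right q hir
  have hrq : r ≤ r * q := Nat.le_mul_of_pos_right r hq
  have hbelow : #{j ∈ Icc 1 n | w j < w i} = i * q := by
    have hvalues : {x ∈ Icc 1 n | x < i * q + 1} = Icc 1 (i * q) := by
      ext x
      simp only [mem_filter, mem_Icc]
      omega
    rw [card_filter_apply_lt hs, hw i hi1 hir, hvalues, Nat.card_Icc, Nat.add_sub_cancel]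
  have hbefore : #{j ∈ Icc 1 n | j < i ∧ w j < w i} = i - 1 := by
    convert Nat.card_Ico 1 i using 2
    ext j
    simp only [mem_filter, mem_Icc, mem_Ico]
    constructor
    · omega
    · rintro ⟨hj1, hji⟩
      have hjq : j * q < i * q := Nat.mul_lt_mul_of_pos_right hji hq
      refine ⟨by omega, hji, ?_⟩
      rw [hw j hj1 (by omega), hw i hi1 hir]
      omega
  have hsplit := lehmerCodeOn_add_card_filter_lt w (Icc 1 n) i
  have : i ≤ i * q := Nat.le_mul_of_pos_right i hq
  rw [Nat.mul_sub_one]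
  omega

theorem stmt_2_general (r q : ℕ) (hq : 2 ≤ q) (n : ℕ) (hn : n = r * q + 1)
    (w : Equiv.Perm ℕ)
    (hfix : ∀ k, k ∉ Finset.Icc 1 n → w k = k)
    (hw : ∀ j, 1 ≤ j → j ≤ r → w j = j * q + 1)
    (hmono : ∀ a b, r + 1 ≤ a → a < b → b ≤ n → w a < w b) :
    ((Finset.Icc 1 n ×ˢ Finset.Icc 1 n).filter
        (fun p => p.1 < p.2 ∧ w.symm p.2 < w.symm p.1)).card
      = r + (q - 1) * (r * (r + 1)) / 2 := by
  have hs := apply_mem_iff_of_forall_notMem hfix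
  change #(inversionsOn w.symm (Icc 1 n)) = _
  have hrn : Icc 1 r ⊆ Icc 1 n := Icc_subset_Icc_right (by nlinarith)
  have htail : ∀ i ∈ Icc 1 n, i ∉ Icc 1 r → w.lehmerCodeOn (Icc 1 n) i = 0 := by
    intro i hi hir
    refine lehmerCodeOn_eq_zero fun j hj hij => hmono i j ?_ hij (mem_Icc.1 hj).2
    simp only [mem_Icc] at hi hir
    omega
  rw [card_inversionsOn_symm hs, card_inversionsOn_eq_sum_lehmerCodeOn, ← sum_subset hrn htail,
    sum_congr rfl fun i hi => lehmerCodeOn_of_mem_Icc (by omega) hn hs hw hi]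
  have := two_mul_sum_Icc_mul_add_one (q - 1) r
  omega

/-- The number of inversions of `w`, i.e. the cardinality of
`{(a,b) : 1 ≤ a < b ≤ n and w⁻¹(a) > w⁻¹(b)}`, equals `r + (q−1)·r(r+1)/2`.
Here `n = rq+1`, `r ≥ 1`, `q ≥ 2`, and `w = w_{r,n}` is the permutation of `{1,…,n}` with
`w(j) = jq+1` for `1 ≤ j ≤ r` and increasing on `{r+1,…,n}`. -/
theorem stmt_2 (r q : ℕ) (hr : 1 ≤ r) (hq : 2 ≤ q) (n : ℕ) (hn : n = r * q + 1)
    (w : Equiv.Perm ℕ)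
    (hfix : ∀ k, k ∉ Finset.Icc 1 n → w k = k)
    (hw : ∀ j, 1 ≤ j → j ≤ r → w j = j * q + 1)
    (hmono : ∀ a b, r + 1 ≤ a → a < b → b ≤ n → w a < w b) :
    ((Finset.Icc 1 n ×ˢ Finset.Icc 1 n).filter
        (fun p => p.1 < p.2 ∧ w.symm p.2 < w.symm p.1)).card
      = r + (q - 1) * (r * (r + 1)) / 2 :=
  stmt_2_general r q hq n hn w hfix hw hmono
end

section
/- Writing s_k for the adjacent transposition (k, k+1) in the symmetric group S_n, the product (s_q s_{q−1} ⋯ s_2 s_1)(s_{2q} s_{2q−1} ⋯ s_2) ⋯ (s_{rq} s_{rq−1} ⋯ s_r), where the j-th block is s_{jq} s_{jq−1} ⋯ s_j, equals the permutation w = w_{r,n}; moreover the total number r + (q−1)·r(r+1)/2 of letters in this word equals the number of inversions of w, so this expression is reduced. -/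
/-!
The block `s_{jq} ⋯ s_j` is the cycle sending `j` to `jq + 1` and moving each of `j + 1, …, jq + 1`
down by one. Multiplying the blocks in, one sees by induction on `r` that the word sends `j` to
`jq + 1` for `j ≤ r`, is increasing on the positions after `r`, and fixes everything outside
`[1, rq + 1]`. These three properties determine a permutation, since on the positions after `r`
it must be the increasing enumeration of the values not of the form `jq + 1`.

For the inversions, `w⁻¹` sends the values `jq + 1` increasingly to positions `≤ r` and the other
values increasingly to positions `> r`. So the inversions are the pairs `(a, jq + 1)` with
`a < jq + 1` not of the form `iq + 1`; for each `j` there are `jq - (j - 1)` of them, which is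
also the length of the `j`-th block.
-/

open Equiv Finset

theorem StrictMonoOn.eqOn_of_image_eq {α β : Type*} [LinearOrder α] [WellFoundedLT α]
    [LinearOrder β] {s : Set α} {f g : α → β} (hf : StrictMonoOn f s) (hg : StrictMonoOn g s)
    (h : f '' s = g '' s) : Set.EqOn f g s := fun x hx =>
  congrArg (fun e : s ≃o g '' s => (e ⟨x, hx⟩ : β))
    (Subsingleton.elim ((hf.orderIso f s).trans (OrderIso.setCongr _ _ h)) (hg.orderIso g s))

theorem Equiv.Perm.eq_of_eqOn_of_strictMonoOn_sdiff {α : Type*} [LinearOrder α]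
    [WellFoundedLT α] {s t : Set α} {f g : Perm α} (hf : ∀ x ∉ s, f x = x)
    (hg : ∀ x ∉ s, g x = x) (hfg : Set.EqOn f g t) (hfm : StrictMonoOn f (s \ t))
    (hgm : StrictMonoOn g (s \ t)) : f = g := by
  have himage {σ : Perm α} (hσ : ∀ x ∉ s, σ x = x) : σ '' s = s :=
    Set.image_perm fun x hx => by_contra fun hxs => hx (hσ x hxs)
  have hsdiff : f '' (s \ t) = g '' (s \ t) := by
    rw [Set.image_sdiff f.injective, Set.image_sdiff g.injective, himage hf, himage hg,
      hfg.image_eq]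
  ext x
  by_cases hxs : x ∈ s
  · by_cases hxt : x ∈ t
    · exact hfg hxt
    · exact hfm.eqOn_of_image_eq hgm hsdiff ⟨hxs, hxt⟩
  · rw [hf x hxs, hg x hxs]

def invPairs {α β : Type*} [LinearOrder α] [LinearOrder β] (u : α → β) (s : Finset α) :
    Finset (α × α) :=
  (s ×ˢ s).filter fun p => p.1 < p.2 ∧ u p.2 < u p.1

theorem invPairs_eq_of_strictMonoOn {α β : Type*} [LinearOrder α] [LinearOrder β]
    {u : α → β} {s t : Finset α} (hts : t ⊆ s) (ht : StrictMonoOn u t)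
    (hst : StrictMonoOn u ↑(s \ t)) (hlt : ∀ a ∈ t, ∀ b ∈ s \ t, u a < u b) :
    invPairs u s = ((s \ t) ×ˢ t).filter fun p => p.1 < p.2 := by
  ext ⟨a, b⟩
  simp only [invPairs, mem_filter, mem_product, mem_sdiff]
  constructor
  · rintro ⟨⟨has, hbs⟩, hab, hba⟩
    by_cases hat : a ∈ t <;> by_cases hbt : b ∈ t
    · exact absurd (ht hat hbt hab) hba.not_gt
    · exact absurd (hlt a hat b (mem_sdiff.2 ⟨hbs, hbt⟩)) hba.not_gt
    · exact ⟨⟨⟨has, hat⟩, hbt⟩, hab⟩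
    · exact absurd (hst (by simp [has, hat]) (by simp [hbs, hbt]) hab) hba.not_gt
  · rintro ⟨⟨⟨has, hat⟩, hbt⟩, hab⟩
    exact ⟨⟨has, hts hbt⟩, hab, hlt b hbt a (mem_sdiff.2 ⟨has, hat⟩)⟩

theorem card_filter_fst_lt_snd {α : Type*} [LinearOrder α] (A B : Finset α) :
    #((A ×ˢ B).filter fun p => p.1 < p.2) = ∑ b ∈ B, #(A.filter (· < b)) := by
  simp only [card_filter, sum_product_right]

theorem sum_Icc_mul_add_one (t r : ℕ) :
    ∑ i ∈ Icc 1 r, (i * t + 1) = r + t * (r * (r + 1)) / 2 := by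
  induction r with
  | zero => simp
  | succ r ih =>
    rw [sum_Icc_succ_top (by omega), ih]
    have h : t * ((r + 1) * (r + 1 + 1)) = t * (r * (r + 1)) + (r + 1) * t * 2 := by ring
    rw [h, Nat.add_mul_div_right _ _ (by omega)]
    omega

def adjSwapProd (l : List ℕ) : Perm ℕ :=
  (l.map fun k => swap k (k + 1)).prod

theorem adjSwapProd_append (l l' : List ℕ) :
    adjSwapProd (l ++ l') = adjSwapProd l * adjSwapProd l' := by
  simp [adjSwapProd]

theorem adjSwapProd_range'_reverse_apply (a m x : ℕ) :
    adjSwapProd (List.range' a m).reverse x =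
      if x = a then a + m else if a < x ∧ x ≤ a + m then x - 1 else x := by
  induction m generalizing x with
  | zero => simp [adjSwapProd]; split_ifs <;> omega
  | succ m ih =>
    rw [List.range'_concat, List.reverse_append, adjSwapProd_append, Perm.mul_apply, ih]
    simp only [adjSwapProd, List.reverse_singleton, List.map_cons, List.map_nil,
      List.prod_singleton, swap_apply_def]
    split_ifs <;> omega

def wordIndices (q r : ℕ) : List ℕ :=
  (List.range' 1 r).flatMap fun j => (List.range' j (j * q - j + 1)).reverse

theorem wordIndices_succ (q r : ℕ) :
    wordIndices q (r + 1) =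
      wordIndices q r ++ (List.range' (r + 1) ((r + 1) * q - (r + 1) + 1)).reverse := by
  simp [wordIndices, List.range'_concat, Nat.add_comm 1 r]

theorem length_wordIndices (q r : ℕ) :
    (wordIndices q r).length = ∑ i ∈ Icc 1 r, (i * (q - 1) + 1) := by
  induction r with
  | zero => rfl
  | succ r ih =>
    rw [wordIndices_succ, List.length_append, ih, sum_Icc_succ_top (by omega), Nat.mul_sub_one]
    simp

def wordPerm (q r : ℕ) : Perm ℕ := adjSwapProd (wordIndices q r)

section wordPerm

variable {q : ℕ}

theorem wordPerm_succ_apply (hq : 1 ≤ q) (r x : ℕ) :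
    wordPerm q (r + 1) x = wordPerm q r
      (if x = r + 1 then (r + 1) * q + 1
        else if r + 1 < x ∧ x ≤ (r + 1) * q + 1 then x - 1 else x) := by
  have : r + 1 ≤ (r + 1) * q := Nat.le_mul_of_pos_right _ hq
  have htop : r + 1 + ((r + 1) * q - (r + 1) + 1) = (r + 1) * q + 1 := by omega
  rw [wordPerm, wordIndices_succ, adjSwapProd_append, Perm.mul_apply,
    adjSwapProd_range'_reverse_apply, htop, ← wordPerm]

theorem wordPerm_apply_of_notMem (hq : 1 ≤ q) {r x : ℕ} (hx : x ∉ Set.Icc 1 (r * q + 1)) :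
    wordPerm q r x = x := by
  induction r generalizing x with
  | zero => rfl
  | succ r ih =>
    rw [Set.mem_Icc] at hx
    have : r + 1 ≤ (r + 1) * q := Nat.le_mul_of_pos_right _ hq
    have : (r + 1) * q = r * q + q := add_one_mul r q
    rw [wordPerm_succ_apply hq, if_neg (show x ≠ r + 1 by omega),
      if_neg (show ¬(r + 1 < x ∧ x ≤ (r + 1) * q + 1) by omega),
      ih (x := x) (by rw [Set.mem_Icc]; omega)]

theorem wordPerm_apply_of_le (hq : 1 ≤ q) {r j : ℕ} (hj : 1 ≤ j) (hjr : j ≤ r) :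
    wordPerm q r j = j * q + 1 := by
  induction r with
  | zero => omega
  | succ r ih =>
    rw [wordPerm_succ_apply hq]
    obtain rfl | hjr := eq_or_lt_of_le hjr
    · have : (r + 1) * q = r * q + q := add_one_mul r q
      rw [if_pos rfl, wordPerm_apply_of_notMem hq (by rw [Set.mem_Icc]; omega)]
    · rw [if_neg (show j ≠ r + 1 by omega), if_neg (show ¬(r + 1 < j ∧ _) by omega),
        ih (by omega)]

theorem wordPerm_apply_le_self (hq : 1 ≤ q) {r x : ℕ} (hx : r < x) : wordPerm q r x ≤ x := by
  induction r generalizing x with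
  | zero => exact le_rfl
  | succ r ih =>
    rw [wordPerm_succ_apply hq, if_neg (show x ≠ r + 1 by omega)]
    split_ifs
    · exact (ih (show r < x - 1 by omega)).trans (Nat.sub_le x 1)
    · exact ih (by omega)

theorem wordPerm_strictMonoOn (hq : 1 ≤ q) (r : ℕ) :
    StrictMonoOn (wordPerm q r) (Set.Ioi r) := by
  induction r with
  | zero => exact fun _ _ _ _ hab => hab
  | succ r ih =>
    intro a ha b hb hab
    rw [Set.mem_Ioi] at ha hb
    have : (r + 1) * q = r * q + q := add_one_mul r q
    rw [wordPerm_succ_apply hq, wordPerm_succ_apply hq, if_neg (show a ≠ r + 1 by omega),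
      if_neg (show b ≠ r + 1 by omega)]
    split_ifs
    · exact ih (show r < a - 1 by omega) (show r < b - 1 by omega) (by omega)
    · calc wordPerm q r (a - 1) ≤ a - 1 := wordPerm_apply_le_self hq (by omega)
        _ < b := by omega
        _ = wordPerm q r b := (wordPerm_apply_of_notMem hq (by rw [Set.mem_Icc]; omega)).symm
    · omega
    · exact ih (show r < a by omega) (show r < b by omega) hab

end wordPerm

theorem strictMono_mul_add_one {q : ℕ} (hq : 1 ≤ q) : StrictMono fun j : ℕ => j * q + 1 :=
  fun _ _ h => Nat.add_lt_add_right (Nat.mul_lt_mul_of_pos_right h hq) 1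

theorem image_mul_add_one_subset_Icc (q r : ℕ) :
    (Icc 1 r).image (· * q + 1) ⊆ Icc 1 (r * q + 1) := by
  intro a ha
  obtain ⟨j, hj, rfl⟩ := mem_image.1 ha
  rw [mem_Icc] at hj ⊢
  exact ⟨by omega, by simpa using Nat.mul_le_mul_right q hj.2⟩

theorem card_filter_lt_sdiff_image_mul_add_one {q r i : ℕ} (hq : 1 ≤ q) (hi : 1 ≤ i)
    (hir : i ≤ r) :
    #((Icc 1 (r * q + 1) \ (Icc 1 r).image (· * q + 1)).filter (· < i * q + 1))
      = i * (q - 1) + 1 := by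
  have hf := strictMono_mul_add_one hq
  have hiq : i * q ≤ r * q := Nat.mul_le_mul_right q hir
  have hle : i ≤ i * q := Nat.le_mul_of_pos_right i hq
  set T := (Icc 1 r).image (· * q + 1)
  have hS : (Icc 1 (r * q + 1)).filter (· < i * q + 1) = Icc 1 (i * q) := by
    ext a; simp only [mem_filter, mem_Icc]; omega
  have hT : T.filter (· < i * q + 1) = (Ico 1 i).image (· * q + 1) := by
    rw [filter_image]
    congr 1
    ext j
    simp only [mem_filter, mem_Icc, mem_Ico, hf.lt_iff_lt]
    omega
  calc #((Icc 1 (r * q + 1) \ T).filter (· < i * q + 1))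
      = #((Icc 1 (r * q + 1)).filter (· < i * q + 1) \ T.filter (· < i * q + 1)) := by
        congr 1; ext a; simp only [mem_filter, mem_sdiff]; tauto
    _ = i * q - (i - 1) := by
        rw [card_sdiff_of_subset (filter_subset_filter _ (image_mul_add_one_subset_Icc q r)),
          hS, hT, card_image_of_injective _ hf.injective, Nat.card_Icc, Nat.card_Ico]
        rfl
    _ = i * (q - 1) + 1 := by rw [Nat.mul_sub_one]; omega

section

variable {r q n : ℕ} {w : Perm ℕ}

theorem wordPerm_eq (hq : 1 ≤ q) (hn : n = r * q + 1)
    (hfix : ∀ k, k ∉ Finset.Icc 1 n → w k = k) (hw : ∀ j, 1 ≤ j → j ≤ r → w j = j * q + 1)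
    (hmono : ∀ a b, r + 1 ≤ a → a < b → b ≤ n → w a < w b) :
    wordPerm q r = w := by
  subst hn
  refine Perm.eq_of_eqOn_of_strictMonoOn_sdiff (s := Set.Icc 1 (r * q + 1)) (t := Set.Icc 1 r)
    (fun x hx => wordPerm_apply_of_notMem hq hx) (fun x hx => hfix x (by simpa using hx))
    (fun j (hj : j ∈ Set.Icc 1 r) => by rw [wordPerm_apply_of_le hq hj.1 hj.2, hw j hj.1 hj.2])
    ((wordPerm_strictMonoOn hq r).mono fun x hx => ?_) fun a ha b hb hab => ?_
  · simp only [Set.mem_sdiff, Set.mem_Icc] at hx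
    exact Set.mem_Ioi.2 (by omega)
  · simp only [Set.mem_sdiff, Set.mem_Icc] at ha hb
    exact hmono a b (by omega) hab hb.1.2

theorem symm_apply_mem_Icc_of_notMem_image (hfix : ∀ k, k ∉ Finset.Icc 1 n → w k = k)
    (hw : ∀ j, 1 ≤ j → j ≤ r → w j = j * q + 1) {x : ℕ} (hx : x ∈ Icc 1 n)
    (hxT : x ∉ (Icc 1 r).image (· * q + 1)) : w.symm x ∈ Set.Icc (r + 1) n := by
  have hwx : w (w.symm x) = x := w.apply_symm_apply x
  have hmem : w.symm x ∈ Icc 1 n := by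
    by_contra h
    rw [hfix _ h] at hwx
    rw [hwx] at h
    exact h hx
  rw [mem_Icc] at hmem
  refine ⟨Nat.lt_of_not_le fun hle => hxT ?_, hmem.2⟩
  exact mem_image.2 ⟨w.symm x, mem_Icc.2 ⟨hmem.1, hle⟩, hw _ hmem.1 hle ▸ hwx⟩

theorem card_invPairs_symm (hq : 1 ≤ q) (hn : n = r * q + 1)
    (hfix : ∀ k, k ∉ Finset.Icc 1 n → w k = k) (hw : ∀ j, 1 ≤ j → j ≤ r → w j = j * q + 1)
    (hmono : ∀ a b, r + 1 ≤ a → a < b → b ≤ n → w a < w b) :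
    #(invPairs w.symm (Icc 1 n)) = ∑ i ∈ Icc 1 r, (i * (q - 1) + 1) := by
  have hf := strictMono_mul_add_one hq
  have hsymm : ∀ j ∈ Icc 1 r, w.symm (j * q + 1) = j := fun j hj => by
    rw [mem_Icc] at hj
    rw [symm_apply_eq, hw j hj.1 hj.2]
  have hsdiff {x} (hx : x ∈ Icc 1 n \ (Icc 1 r).image (· * q + 1)) :=
    symm_apply_mem_Icc_of_notMem_image hfix hw (mem_sdiff.1 hx).1 (mem_sdiff.1 hx).2
  have hwm : StrictMonoOn w (Set.Icc (r + 1) n) :=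
    fun a ha b hb hab => hmono a b ha.1 hab hb.2
  rw [invPairs_eq_of_strictMonoOn (hn ▸ image_mul_add_one_subset_Icc q r) ?monoT ?monoS ?lt,
    card_filter_fst_lt_snd, sum_image hf.injective.injOn]
  · refine sum_congr rfl fun i hi => ?_
    rw [mem_Icc] at hi
    exact hn ▸ card_filter_lt_sdiff_image_mul_add_one hq hi.1 hi.2
  case monoT =>
    rintro _ ha _ hb hab
    obtain ⟨i, hi, rfl⟩ := mem_image.1 ha
    obtain ⟨j, hj, rfl⟩ := mem_image.1 hb
    rw [hsymm i hi, hsymm j hj]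
    exact hf.lt_iff_lt.1 hab
  case monoS =>
    intro a ha b hb hab
    exact (hwm.lt_iff_lt (hsdiff ha) (hsdiff hb)).1 (by simpa using hab)
  case lt =>
    intro a ha b hb
    obtain ⟨i, hi, rfl⟩ := mem_image.1 ha
    rw [hsymm i hi]
    exact (mem_Icc.1 hi).2.trans_lt (hsdiff hb).1

end

theorem stmt_3_general (r q : ℕ) (hq : 2 ≤ q) (n : ℕ) (hn : n = r * q + 1)
    (w : Equiv.Perm ℕ)
    (hfix : ∀ k, k ∉ Finset.Icc 1 n → w k = k)
    (hw : ∀ j, 1 ≤ j → j ≤ r → w j = j * q + 1)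
    (hmono : ∀ a b, r + 1 ≤ a → a < b → b ≤ n → w a < w b) :
    (((List.range' 1 r).flatMap fun j => (List.range' j (j * q - j + 1)).reverse).map
        (fun k => Equiv.swap k (k + 1))).prod = w
    ∧ ((List.range' 1 r).flatMap fun j => (List.range' j (j * q - j + 1)).reverse).length
        = r + (q - 1) * (r * (r + 1)) / 2
    ∧ r + (q - 1) * (r * (r + 1)) / 2
        = ((Finset.Icc 1 n ×ˢ Finset.Icc 1 n).filter
            (fun p => p.1 < p.2 ∧ w.symm p.2 < w.symm p.1)).card := by
  have hq1 : 1 ≤ q := by omega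
  rw [← sum_Icc_mul_add_one]
  exact ⟨wordPerm_eq hq1 hn hfix hw hmono, length_wordIndices q r,
    (card_invPairs_symm hq1 hn hfix hw hmono).symm⟩

/-- Writing `s_k` for the adjacent transposition `(k, k+1)`, the product
`(s_q ⋯ s_1)(s_{2q} ⋯ s_2) ⋯ (s_{rq} ⋯ s_r)` (the `j`-th block being `s_{jq} s_{jq−1} ⋯ s_j`)
equals the permutation `w = w_{r,n}`; moreover the total number `r + (q−1)·r(r+1)/2` of
letters in this word equals the number of inversions of `w`, so the expression is reduced.
Here `n = rq+1`, `r ≥ 1`, `q ≥ 2`, and `w` is as in the context (one-line notation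
`(q+1, …, rq+1)` followed by the remaining values in increasing order). -/
theorem stmt_3 (r q : ℕ) (hr : 1 ≤ r) (hq : 2 ≤ q) (n : ℕ) (hn : n = r * q + 1)
    (w : Equiv.Perm ℕ)
    (hfix : ∀ k, k ∉ Finset.Icc 1 n → w k = k)
    (hw : ∀ j, 1 ≤ j → j ≤ r → w j = j * q + 1)
    (hmono : ∀ a b, r + 1 ≤ a → a < b → b ≤ n → w a < w b) :
    (((List.range' 1 r).flatMap fun j => (List.range' j (j * q - j + 1)).reverse).map
        (fun k => Equiv.swap k (k + 1))).prod = w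
    ∧ ((List.range' 1 r).flatMap fun j => (List.range' j (j * q - j + 1)).reverse).length
        = r + (q - 1) * (r * (r + 1)) / 2
    ∧ r + (q - 1) * (r * (r + 1)) / 2
        = ((Finset.Icc 1 n ×ˢ Finset.Icc 1 n).filter
            (fun p => p.1 < p.2 ∧ w.symm p.2 < w.symm p.1)).card :=
  stmt_3_general r q hq n hn w hfix hw hmono
end

section
/- For every natural number k, if e(k) ≥ 1 then e(k+1) < e(k). -/
/-- For every natural number `k`, if `e(k) ≥ 1` then `e(k+1) < e(k)`.
Here `n = rq+1` with `r ≥ 1`, `q ≥ 2`; `i_1,…,i_r` are fixed with `i_j ∈ C_j`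
(where `C_j = {1,…,jq+1} \ {pq+1 : 1 ≤ p ≤ j}`); `d(i) = ⌈i/q⌉`; `1 ≤ j ≤ r` is fixed;
and `e : ℕ → ℕ` satisfies `e(0) = j`, `e(k+1) = d(i_{e(k)}) − 1` if `e(k) ≥ 1`, and
`e(k+1) = 0` if `e(k) = 0`. -/
theorem stmt_6 (r q : ℕ) (hr : 1 ≤ r) (hq : 2 ≤ q) (n : ℕ) (hn : n = r * q + 1)
    (i : ℕ → ℕ)
    (hi : ∀ j, 1 ≤ j → j ≤ r →
      1 ≤ i j ∧ i j ≤ j * q + 1 ∧ ∀ p, 1 ≤ p → p ≤ j → i j ≠ p * q + 1)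
    (d : ℕ → ℕ) (hd : ∀ m, (d m : ℤ) = ⌈(m : ℚ) / (q : ℚ)⌉)
    (j : ℕ) (hj1 : 1 ≤ j) (hjr : j ≤ r)
    (e : ℕ → ℕ) (he0 : e 0 = j)
    (heS : ∀ k, e (k + 1) = if 1 ≤ e k then d (i (e k)) - 1 else 0) :
    ∀ k, 1 ≤ e k → e (k + 1) < e k := by
  have hq0 : (0:ℚ) < (q:ℚ) := by positivity
  -- key: for 1 ≤ m ≤ r, d (i m) ≤ m
  have key : ∀ m, 1 ≤ m → m ≤ r → d (i m) ≤ m := by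
    intro m h1 h2
    obtain ⟨hi1, hi2, hi3⟩ := hi m h1 h2
    have him : i m ≤ m * q := by
      have := hi3 m h1 le_rfl
      omega
    have : (d (i m) : ℤ) ≤ (m : ℤ) := by
      rw [hd]
      apply Int.ceil_le.mpr
      rw [div_le_iff₀ hq0]
      push_cast
      exact_mod_cast (by exact_mod_cast him : ((i m : ℚ)) ≤ (m : ℚ) * q)
    exact_mod_cast this
  have hbound : ∀ k, e k ≤ r := by
    intro k
    induction k with
    | zero => rw [he0]; exact hjr
    | succ k ih =>
      rw [heS k]
      split
      · next h =>
        have := key (e k) h ih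
        omega
      · omega
  intro k hk
  rw [heS k, if_pos hk]
  have := key (e k) hk (hbound k)
  omega
end

section
/- Let m be the least natural number with e(m) = 0 and set γ_j = Σ_{k=0}^{m−1} β_{i_{e(k)}, e(k)} ∈ ℝ^n. Then for every 1 ≤ l ≤ r, the pairing ⟨γ_j, λ_{lq}⟩ (the sum of the first lq coordinates of γ_j) equals 1 if 1 ≤ l ≤ j, and equals 0 if j+1 ≤ l ≤ r. -/
open Finset

/-! For `a ≥ 1` the pairing of `e_a − e_{sq+1}` with `λ_{lq}` is `[a ≤ lq] − [s < l]`.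
Since `i_s ∈ C_s` avoids `sq + 1`, we have `i_s ≤ sq`, so `e(k+1) = ⌈i_{e(k)}/q⌉ − 1 < e(k)`
and the chain stays in `[0, j]`. For the root `β_{i_{e(k)}, e(k)}` this gives
`[i_{e(k)} ≤ lq] = [e(k+1) < l]`, so the sum over `k` telescopes to
`[e(m) < l] − [e(0) < l] = 1 − [j < l]`. -/

theorem Int.ceil_natCast_div_le_natCast_iff {a q l : ℕ} (hq : 0 < q) :
    ⌈(a : ℚ) / q⌉ ≤ (l : ℤ) ↔ a ≤ l * q := by
  rw [Int.ceil_le, div_le_iff₀ (by exact_mod_cast hq)]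
  norm_cast

theorem Finset.sum_ite_eq_sub_ite_eq {α R : Type*} [DecidableEq α] [AddCommGroupWithOne R]
    (s : Finset α) (a b : α) :
    ∑ t ∈ s, ((if t = a then (1 : R) else 0) - (if t = b then (1 : R) else 0)) =
      (if a ∈ s then 1 else 0) - (if b ∈ s then 1 else 0) := by
  rw [sum_sub_distrib, sum_ite_eq', sum_ite_eq']

theorem mul_add_one_mem_Icc_one_mul_iff {q s l : ℕ} (hq : 0 < q) :
    s * q + 1 ∈ Icc 1 (l * q) ↔ s < l := by
  rw [mem_Icc, ← Nat.mul_lt_mul_right hq]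
  omega

theorem pred_lt_iff_le_mul {q a l : ℕ} {d : ℕ → ℕ} (hd : ∀ a l, d a ≤ l ↔ a ≤ l * q)
    (hl : 1 ≤ l) : d a - 1 < l ↔ a ≤ l * q := by
  rw [← hd]
  omega

theorem le_apply_zero_of_succ_eq_ite {e g : ℕ → ℕ} {r : ℕ}
    (hg : ∀ s, 1 ≤ s → s ≤ r → g s < s) (h0 : e 0 ≤ r)
    (hS : ∀ k, e (k + 1) = if 1 ≤ e k then g (e k) else 0) (k : ℕ) : e k ≤ e 0 := by
  induction k with
  | zero => rfl
  | succ k ih =>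
    rw [hS k]
    split_ifs with hk
    · exact ((hg _ hk (ih.trans h0)).trans_le ih).le
    · exact Nat.zero_le _

theorem stmt_10_general (r q : ℕ) (hq : 2 ≤ q)
    (i : ℕ → ℕ)
    (hi : ∀ j, 1 ≤ j → j ≤ r →
      1 ≤ i j ∧ i j ≤ j * q + 1 ∧ ∀ p, 1 ≤ p → p ≤ j → i j ≠ p * q + 1)
    (d : ℕ → ℕ) (hd : ∀ m, (d m : ℤ) = ⌈(m : ℚ) / (q : ℚ)⌉)
    (j : ℕ) (hjr : j ≤ r)
    (e : ℕ → ℕ) (he0 : e 0 = j)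
    (heS : ∀ k, e (k + 1) = if 1 ≤ e k then d (i (e k)) - 1 else 0)
    (m : ℕ) (hm0 : e m = 0) (hmleast : ∀ k, k < m → e k ≠ 0) :
    ∀ l, 1 ≤ l → l ≤ r →
      (∑ k ∈ Finset.range m, ∑ t ∈ Finset.Icc 1 (l * q),
          ((if t = i (e k) then (1 : ℝ) else 0) - (if t = (e k) * q + 1 then (1 : ℝ) else 0)))
        = if l ≤ j then 1 else 0 := by
  intro l hl1 _
  have hq0 : 0 < q := by omega
  have hdle : ∀ a l, d a ≤ l ↔ a ≤ l * q := fun a l => by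
    rw [← Int.ceil_natCast_div_le_natCast_iff hq0, ← hd]
    exact Int.ofNat_le.symm
  have hdesc : ∀ s, 1 ≤ s → s ≤ r → d (i s) - 1 < s := fun s hs1 hs2 => by
    obtain ⟨-, hle, hne⟩ := hi s hs1 hs2
    have := hne s hs1 le_rfl
    exact (pred_lt_iff_le_mul hdle hs1).2 (by omega)
  have hej : ∀ k, e k ≤ j := fun k =>
    he0 ▸ le_apply_zero_of_succ_eq_ite hdesc (he0 ▸ hjr) heS k
  have hterm : ∀ k ∈ range m,
      ∑ t ∈ Icc 1 (l * q),
          ((if t = i (e k) then (1 : ℝ) else 0) - (if t = e k * q + 1 then (1 : ℝ) else 0)) =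
        (if e (k + 1) < l then 1 else 0) - (if e k < l then 1 else 0) := fun k hk => by
    have hek : 1 ≤ e k := Nat.one_le_iff_ne_zero.2 (hmleast k (mem_range.1 hk))
    obtain ⟨hi1, -, -⟩ := hi (e k) hek ((hej k).trans hjr)
    have hmem : i (e k) ∈ Icc 1 (l * q) ↔ e (k + 1) < l := by
      rw [heS k, if_pos hek, pred_lt_iff_le_mul hdle hl1, mem_Icc]
      exact and_iff_right hi1
    simp only [sum_ite_eq_sub_ite_eq, hmem, mul_add_one_mem_Icc_one_mul_iff hq0]
  rw [sum_congr rfl hterm, sum_range_sub (fun k => if e k < l then (1 : ℝ) else 0), hm0, he0]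
  have hl0 : 0 < l := hl1
  by_cases h : l ≤ j
  · simp [h, hl0, Nat.not_lt.2 h]
  · simp [h, hl0, Nat.lt_of_not_le h]

/-- Let `m` be the least natural number with `e(m) = 0` and set
`γ_j = Σ_{k=0}^{m−1} β_{i_{e(k)}, e(k)} ∈ ℝ^n`, where `β_{i,j} = e_i − e_{jq+1}`.
Then for every `1 ≤ l ≤ r`, the pairing `⟨γ_j, λ_{lq}⟩` (the sum of the first `lq`
coordinates of `γ_j`) equals `1` if `1 ≤ l ≤ j`, and `0` if `j+1 ≤ l ≤ r`.
Here `n = rq+1` with `r ≥ 1`, `q ≥ 2`; `i_1,…,i_r` are fixed with `i_j ∈ C_j`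
(`C_j = {1,…,jq+1} \ {pq+1 : 1 ≤ p ≤ j}`); `d(i) = ⌈i/q⌉`; `1 ≤ j ≤ r`; and
`e : ℕ → ℕ` satisfies `e(0) = j`, `e(k+1) = d(i_{e(k)}) − 1` if `e(k) ≥ 1`,
`e(k+1) = 0` if `e(k) = 0`. -/
theorem stmt_10 (r q : ℕ) (hr : 1 ≤ r) (hq : 2 ≤ q) (n : ℕ) (hn : n = r * q + 1)
    (i : ℕ → ℕ)
    (hi : ∀ j, 1 ≤ j → j ≤ r →
      1 ≤ i j ∧ i j ≤ j * q + 1 ∧ ∀ p, 1 ≤ p → p ≤ j → i j ≠ p * q + 1)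
    (d : ℕ → ℕ) (hd : ∀ m, (d m : ℤ) = ⌈(m : ℚ) / (q : ℚ)⌉)
    (j : ℕ) (hj1 : 1 ≤ j) (hjr : j ≤ r)
    (e : ℕ → ℕ) (he0 : e 0 = j)
    (heS : ∀ k, e (k + 1) = if 1 ≤ e k then d (i (e k)) - 1 else 0)
    (m : ℕ) (hm0 : e m = 0) (hmleast : ∀ k, k < m → e k ≠ 0) :
    ∀ l, 1 ≤ l → l ≤ r →
      (∑ k ∈ Finset.range m, ∑ t ∈ Finset.Icc 1 (l * q),
          ((if t = i (e k) then (1 : ℝ) else 0) - (if t = (e k) * q + 1 then (1 : ℝ) else 0)))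
        = if l ≤ j then 1 else 0 :=
  stmt_10_general r q hq i hi d hd j hjr e he0 heS m hm0 hmleast
end

section
/- For every 1 ≤ i ≤ r, Σ_{k=1}^{iq} (nω_r)_{w⁻¹(k)} = −(n − i); that is, the pairing of the permuted weight w(nω_r) with the fundamental coweight λ_{iq} equals −(n−i). -/
/-!
Only the first `r` coordinates of `nω_r` are `n - r`, so the sum counts how many of the
positions `w 1, …, w r` (that is, `q + 1, 2q + 1, …, rq + 1`) lie in `[1, iq]`: exactly the
`i - 1` values `jq + 1` with `1 ≤ j < i`. Writing each summand as `n · [w⁻¹ k ≤ r] - r`, the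
sum is `n (i - 1) - r i q = -(n - i)` because `n = rq + 1`.
-/

open Finset

theorem filter_symm_le_eq_image {w : Equiv.Perm ℕ} {r q i : ℕ} (hq : 0 < q) (h0 : w 0 = 0)
    (hw : ∀ j, 1 ≤ j → j ≤ r → w j = j * q + 1) (hir : i ≤ r) :
    (Icc 1 (i * q)).filter (fun k => w.symm k ≤ r) = (Ico 1 i).image (fun j => j * q + 1) := by
  ext k
  simp only [mem_filter, mem_Icc, mem_Ico, mem_image]
  constructor
  · rintro ⟨⟨hk1, hki⟩, hjr⟩
    have hj1 : 1 ≤ w.symm k := by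
      by_contra! hj
      rw [Nat.lt_one_iff, Equiv.symm_apply_eq, h0] at hj
      omega
    have hk : w.symm k * q + 1 = k := by rw [← hw _ hj1 hjr, Equiv.apply_symm_apply]
    refine ⟨w.symm k, ⟨hj1, ?_⟩, hk⟩
    by_contra! hij
    have := Nat.mul_le_mul_right q hij
    omega
  · rintro ⟨j, ⟨hj1, hji⟩, rfl⟩
    have hsymm : w.symm (j * q + 1) = j := by rw [Equiv.symm_apply_eq, hw j hj1 (by omega)]
    refine ⟨⟨by omega, ?_⟩, by rw [hsymm]; omega⟩
    have := Nat.mul_le_mul_right q (Nat.succ_le_of_lt hji)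
    rw [Nat.succ_mul] at this
    omega

theorem card_filter_symm_le {w : Equiv.Perm ℕ} {r q i : ℕ} (hq : 0 < q) (h0 : w 0 = 0)
    (hw : ∀ j, 1 ≤ j → j ≤ r → w j = j * q + 1) (hir : i ≤ r) :
    #((Icc 1 (i * q)).filter (fun k => w.symm k ≤ r)) = i - 1 := by
  have hinj : Function.Injective (fun j : ℕ => j * q + 1) :=
    (add_left_injective 1).comp (mul_left_injective₀ hq.ne')
  rw [filter_symm_le_eq_image hq h0 hw hir, card_image_of_injective _ hinj, Nat.card_Ico]

theorem sum_ite_eq_mul_card_filter_sub {ι R : Type*} [CommRing R] (s : Finset ι)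
    (p : ι → Prop) [DecidablePred p] (a b : R) :
    ∑ k ∈ s, (if p k then a - b else -b) = a * #(s.filter p) - b * #s := by
  have hsummand : ∀ k, (if p k then a - b else -b) = a * (if p k then (1 : R) else 0) - b := by
    intro k
    split_ifs <;> ring
  simp only [hsummand, sum_sub_distrib, ← mul_sum, sum_boole, sum_const, nsmul_eq_mul]
  ring

theorem stmt_12_general (r q : ℕ) (hq : 2 ≤ q) (n : ℕ) (hn : n = r * q + 1)
    (w : Equiv.Perm ℕ)
    (hfix : ∀ k, k ∉ Finset.Icc 1 n → w k = k)
    (hw : ∀ j, 1 ≤ j → j ≤ r → w j = j * q + 1)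
    (i : ℕ) (hi1 : 1 ≤ i) (hir : i ≤ r) :
    (∑ k ∈ Finset.Icc 1 (i * q),
        (if w.symm k ≤ r then ((n : ℝ) - (r : ℝ)) else -(r : ℝ)))
      = -((n : ℝ) - (i : ℝ)) := by
  have hcard := card_filter_symm_le (by omega) (hfix 0 (by simp)) hw hir
  rw [sum_ite_eq_mul_card_filter_sub, hcard, Nat.card_Icc, hn]
  push_cast [Nat.cast_sub hi1]
  ring

/-- For every `1 ≤ i ≤ r`, `Σ_{k=1}^{iq} (nω_r)_{w⁻¹(k)} = −(n − i)`;
that is, the pairing of the permuted weight `w(nω_r)` with the fundamental coweight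
`λ_{iq}` equals `−(n−i)`. Here `n = rq+1` with `r ≥ 1`, `q ≥ 2`; `nω_r ∈ ℝ^n` has its
first `r` coordinates equal to `n−r` and the remaining `n−r` coordinates equal to `−r`;
and `w = w_{r,n}` is the permutation of `{1,…,n}` with `w(j) = jq+1` for `1 ≤ j ≤ r`
and increasing on `{r+1,…,n}`. -/
theorem stmt_12 (r q : ℕ) (hr : 1 ≤ r) (hq : 2 ≤ q) (n : ℕ) (hn : n = r * q + 1)
    (w : Equiv.Perm ℕ)
    (hfix : ∀ k, k ∉ Finset.Icc 1 n → w k = k)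
    (hw : ∀ j, 1 ≤ j → j ≤ r → w j = j * q + 1)
    (hmono : ∀ a b, r + 1 ≤ a → a < b → b ≤ n → w a < w b)
    (i : ℕ) (hi1 : 1 ≤ i) (hir : i ≤ r) :
    (∑ k ∈ Finset.Icc 1 (i * q),
        (if w.symm k ≤ r then ((n : ℝ) - (r : ℝ)) else -(r : ℝ)))
      = -((n : ℝ) - (i : ℝ)) :=
  stmt_12_general r q hq n hn w hfix hw i hi1 hir
end

section
/- For all 1 ≤ j ≤ r, 1 ≤ l ≤ r, i ∈ C_j and k ∈ C_l, the vector β_{i,j} + β_{k,l} = (e_i − e_{jq+1}) + (e_k − e_{lq+1}) is not a root of type A_{n−1}; i.e. there exist no indices a ≠ b in {1,…,n} with β_{i,j} + β_{k,l} = e_a − e_b. -/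
/-- For all `1 ≤ j ≤ r`, `1 ≤ l ≤ r`, `i ∈ C_j` and `k ∈ C_l`, the vector
`β_{i,j} + β_{k,l} = (e_i − e_{jq+1}) + (e_k − e_{lq+1})` is not a root of type `A_{n−1}`;
i.e. there are no indices `a ≠ b` in `{1,…,n}` with `β_{i,j} + β_{k,l} = e_a − e_b`.
Here `n = rq+1` with `r ≥ 1`, `q ≥ 2`, and `C_j = {1,…,jq+1} \ {pq+1 : 1 ≤ p ≤ j}`. -/
theorem stmt_13 (r q : ℕ) (hr : 1 ≤ r) (hq : 2 ≤ q) (n : ℕ) (hn : n = r * q + 1)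
    (j : ℕ) (hj1 : 1 ≤ j) (hjr : j ≤ r)
    (l : ℕ) (hl1 : 1 ≤ l) (hlr : l ≤ r)
    (i : ℕ) (hi1 : 1 ≤ i) (hi2 : i ≤ j * q + 1)
    (hiC : ∀ p, 1 ≤ p → p ≤ j → i ≠ p * q + 1)
    (k : ℕ) (hk1 : 1 ≤ k) (hk2 : k ≤ l * q + 1)
    (hkC : ∀ p, 1 ≤ p → p ≤ l → k ≠ p * q + 1) :
    ¬ ∃ a b : ℕ, a ∈ Finset.Icc 1 n ∧ b ∈ Finset.Icc 1 n ∧ a ≠ b ∧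
      ∀ t : ℕ,
        ((if t = i then (1 : ℝ) else 0) - (if t = j * q + 1 then (1 : ℝ) else 0))
          + ((if t = k then (1 : ℝ) else 0) - (if t = l * q + 1 then (1 : ℝ) else 0))
        = (if t = a then (1 : ℝ) else 0) - (if t = b then (1 : ℝ) else 0) := by
  rintro ⟨a, b, ha, hb, hab, h⟩
  have hij : i ≠ j * q + 1 := hiC j hj1 le_rfl
  have hkl : k ≠ l * q + 1 := hkC l hl1 le_rfl
  have hkj : k ≠ j * q + 1 := by
    rcases le_or_gt j l with hjl | hjl
    · exact hkC j hj1 hjl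
    · have h2 : (l + 1) * q ≤ j * q := Nat.mul_le_mul_right q (by omega)
      have h3 : (l + 1) * q = l * q + q := by ring
      omega
  have hil : i ≠ l * q + 1 := by
    rcases le_or_gt l j with hlj | hlj
    · exact hiC l hl1 hlj
    · have h2 : (j + 1) * q ≤ l * q := Nat.mul_le_mul_right q (by omega)
      have h3 : (j + 1) * q = j * q + q := by ring
      omega
  rcases eq_or_ne j l with hJL | hJL
  · subst hJL
    have h1 := h (j * q + 1)
    rw [if_neg (Ne.symm hij), if_pos rfl, if_neg (Ne.symm hkj)] at h1
    split_ifs at h1 <;> norm_num at h1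
  · have hne : j * q + 1 ≠ l * q + 1 := by
      intro hc
      have hmul : j * q = l * q := by omega
      exact hJL (Nat.eq_of_mul_eq_mul_right (show 0 < q by omega) hmul)
    have h1 := h (j * q + 1)
    rw [if_neg (Ne.symm hij), if_pos rfl, if_neg (Ne.symm hkj), if_neg hne] at h1
    have h2 := h (l * q + 1)
    rw [if_neg (Ne.symm hil), if_neg (Ne.symm hne), if_neg (Ne.symm hkl),
      if_pos rfl] at h2
    have hb1 : j * q + 1 = b := by
      by_contra hc
      rw [if_neg hc] at h1
      split_ifs at h1 <;> norm_num at h1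
    have hb2 : l * q + 1 = b := by
      by_contra hc
      rw [if_neg hc] at h2
      split_ifs at h2 <;> norm_num at h2
    exact hne (hb1.trans hb2.symm)
end

section
/- Let i_j ∈ C_j be arbitrary for each 1 ≤ j ≤ r, let J = {1, …, n−1} \ {jq : 1 ≤ j ≤ r}, and for 1 ≤ j ≤ r let v_j = Σ_{k=i_j}^{jq} ε_k ∈ ℤ^{n−1}, where ε_1, …, ε_{n−1} is the standard basis of ℤ^{n−1}. Then the ℤ-submodule of ℤ^{n−1} generated by {v_j : 1 ≤ j ≤ r} ∪ {ε_k : k ∈ J} is all of ℤ^{n−1}. -/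
/-!
Order the coordinates of `ℤ^{n-1}` by their index. For every index `k` some generator has
coordinate `1` at `k` and vanishes above `k`: the basis vector `ε_k` itself when `k ∈ J`, and
`v_j` when `k = jq` (its support is `[i_j, jq]`, nonempty because `i_j ≠ jq + 1`). Such a
unitriangular family spans the whole lattice, by induction on `k`.
-/

namespace Submodule

variable {R ι : Type*} [Ring R] [Fintype ι] [LinearOrder ι]

theorem single_one_mem_of_forall_exists_unitriangular (S : Submodule R (ι → R))
    (h : ∀ t, ∃ x ∈ S, x t = 1 ∧ ∀ s, t < s → x s = 0) (t : ι) :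
    Pi.single t 1 ∈ S := by
  induction t using WellFoundedLT.induction with
  | ind t ih =>
    obtain ⟨x, hxS, hxt, hx_above⟩ := h t
    set y := ∑ s with s < t, x s • (Pi.single s 1 : ι → R)
    have hy : y ∈ S := sum_mem fun s hs => smul_mem _ _ (ih s (Finset.mem_filter.mp hs).2)
    have hxy : x - y = Pi.single t 1 := by
      funext s
      rcases lt_trichotomy s t with hst | rfl | hts
      · simp [y, Finset.sum_apply, Pi.single_apply, hst, hst.ne]
      · simp [y, Finset.sum_apply, Pi.single_apply, hxt]
      · simp [y, Finset.sum_apply, Pi.single_apply, hx_above s hts, hts.ne', hts.not_gt]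
    exact hxy ▸ sub_mem hxS hy

theorem eq_top_of_forall_exists_unitriangular (S : Submodule R (ι → R))
    (h : ∀ t, ∃ x ∈ S, x t = 1 ∧ ∀ s, t < s → x s = 0) : S = ⊤ := by
  rw [eq_top_iff, ← (Pi.basisFun R ι).span_eq, span_le]
  rintro _ ⟨t, rfl⟩
  simpa using single_one_mem_of_forall_exists_unitriangular S h t

end Submodule

theorem stmt_15_general (r q : ℕ) (n : ℕ)
    (i : ℕ → ℕ)
    (hi : ∀ j, 1 ≤ j → j ≤ r →
      1 ≤ i j ∧ i j ≤ j * q + 1 ∧ ∀ p, 1 ≤ p → p ≤ j → i j ≠ p * q + 1)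
    (v : ℕ → Fin (n - 1) → ℤ)
    (hv : ∀ j, v j = fun t : Fin (n - 1) => if i j ≤ (t : ℕ) + 1 ∧ (t : ℕ) + 1 ≤ j * q then (1 : ℤ) else 0)
    (f : Fin r ⊕ {k : ℕ // 1 ≤ k ∧ k ≤ n - 1 ∧ ∀ j, 1 ≤ j → j ≤ r → k ≠ j * q}
        → Fin (n - 1) → ℤ)
    (hfl : ∀ a : Fin r, f (Sum.inl a) = v ((a : ℕ) + 1))
    (hfr : ∀ k, f (Sum.inr k) = fun t : Fin (n - 1) => if (t : ℕ) + 1 = (k : ℕ) then (1 : ℤ) else 0) :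
    Submodule.span ℤ (Set.range f) = ⊤ := by
  refine Submodule.eq_top_of_forall_exists_unitriangular _ fun t => ?_
  by_cases hJ : ∀ j, 1 ≤ j → j ≤ r → (t : ℕ) + 1 ≠ j * q
  · refine ⟨_, Submodule.subset_span
      (Set.mem_range_self (Sum.inr ⟨t + 1, by omega, by omega, hJ⟩)), ?_, fun s hst => ?_⟩
    · simp [hfr]
    · simp [hfr, Fin.val_eq_val, hst.ne']
  · push Not at hJ
    obtain ⟨j, hj1, hjr, htj⟩ := hJ
    obtain ⟨-, hij, hij_ne⟩ := hi j hj1 hjr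
    have hvj : v j = f (Sum.inl ⟨j - 1, by omega⟩) := by
      rw [hfl, Nat.sub_add_cancel hj1]
    have hij_le : i j ≤ j * q := by have := hij_ne j hj1 le_rfl; omega
    refine ⟨v j, hvj ▸ Submodule.subset_span (Set.mem_range_self _), ?_, fun s hst => ?_⟩
    · simp only [hv]
      rw [if_pos (by omega)]
    · simp only [hv]
      rw [if_neg (by rw [Fin.lt_def] at hst; omega)]

/-- Let `i_j ∈ C_j` be arbitrary for each `1 ≤ j ≤ r`, let
`J = {1,…,n−1} \ {jq : 1 ≤ j ≤ r}`, and for `1 ≤ j ≤ r` let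
`v_j = Σ_{k=i_j}^{jq} ε_k ∈ ℤ^{n−1}` (standard basis `ε_1,…,ε_{n−1}`, here realized as
`Fin (n−1) → ℤ` with coordinate `t` corresponding to the index `t+1`). Then the
ℤ-submodule of `ℤ^{n−1}` generated by `{v_j : 1 ≤ j ≤ r} ∪ {ε_k : k ∈ J}` is all of
`ℤ^{n−1}`. Here `n = rq+1` with `r ≥ 1`, `q ≥ 2`, and
`C_j = {1,…,jq+1} \ {pq+1 : 1 ≤ p ≤ j}`. -/
theorem stmt_15 (r q : ℕ) (hr : 1 ≤ r) (hq : 2 ≤ q) (n : ℕ) (hn : n = r * q + 1)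
    (i : ℕ → ℕ)
    (hi : ∀ j, 1 ≤ j → j ≤ r →
      1 ≤ i j ∧ i j ≤ j * q + 1 ∧ ∀ p, 1 ≤ p → p ≤ j → i j ≠ p * q + 1)
    (v : ℕ → Fin (n - 1) → ℤ)
    (hv : ∀ j, v j = fun t : Fin (n - 1) => if i j ≤ (t : ℕ) + 1 ∧ (t : ℕ) + 1 ≤ j * q then (1 : ℤ) else 0)
    (f : Fin r ⊕ {k : ℕ // 1 ≤ k ∧ k ≤ n - 1 ∧ ∀ j, 1 ≤ j → j ≤ r → k ≠ j * q}
        → Fin (n - 1) → ℤ)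
    (hfl : ∀ a : Fin r, f (Sum.inl a) = v ((a : ℕ) + 1))
    (hfr : ∀ k, f (Sum.inr k) = fun t : Fin (n - 1) => if (t : ℕ) + 1 = (k : ℕ) then (1 : ℤ) else 0) :
    Submodule.span ℤ (Set.range f) = ⊤ :=
  stmt_15_general r q n i hi v hv f hfl hfr
end
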